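/- Let φ : (A, ⟪−,−⟫_A) → (B, ⟪−,−⟫_B) be a morphism of double Poisson algebras, and define n_φ(a, f, b) := n_A(a, f∘φ, b) and m_φ(f, a, g) := m_B(f, φ(a), g) as above. Then for all a, b, c ∈ A and f, g ∈ B*: n_φ(ab, f, c) = n_φ(a, b·f, c) + a·n_φ(b, f, c) in A, and m_φ(f, a, g·b) = m_φ(f, a, g)·b − f·n_φ(a, g, b) in B*, where the A-actions on B* are (b·f)(x) := f(xφ(b)) and (f·b)(x) := f(φ(b)x). (These are the quartic Stasheff identities SI(4) for the A∞-structure on ∂_{d−1}φ = A ⊕ B*[d−1] constructed in Theorem 5.5, in the degree 0, trivially graded case.) -/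

import Mathlib

/-!
The first identity is the Leibniz rule of `⟪-,-⟫_A` in its second argument, read through
`id ⊗ (f ∘ φ)`. For the second, antisymmetry of `⟪-,-⟫_B` turns `⟪y z, x⟫` into `-τ⟪x, y z⟫`,
where the Leibniz rule applies; the resulting term with `⟪x, y⟫` is `f · n_B(x, g, y)`, and
`n_B(φ a, g, φ b) = φ (n_φ(a, g, b))` because `φ` intertwines the brackets.
-/

open TensorProduct

noncomputable section

variable {k : Type*} [Field k] [CharZero k]
variable {A : Type*} [NonUnitalRing A] [Module k A] [SMulCommClass k A A] [IsScalarTower k A A]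

/-- Outer left action of `A` on `A ⊗ A`: `a · (u ⊗ v) = (a*u) ⊗ v`. -/
def lAct (a : A) : A ⊗[k] A →ₗ[k] A ⊗[k] A :=
  TensorProduct.map (LinearMap.mulLeft k a) LinearMap.id

/-- Outer right action of `A` on `A ⊗ A`: `(u ⊗ v) · b = u ⊗ (v*b)`. -/
def rAct (b : A) : A ⊗[k] A →ₗ[k] A ⊗[k] A :=
  TensorProduct.map LinearMap.id (LinearMap.mulRight k b)

/-- `⟪a, u ⊗ v⟫_L = ⟪a,u⟫ ⊗ v`, extended linearly. -/
def brL (br : A →ₗ[k] A →ₗ[k] A ⊗[k] A) (a : A) :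
    A ⊗[k] A →ₗ[k] (A ⊗[k] A) ⊗[k] A :=
  TensorProduct.map (br a) LinearMap.id

/-- The cyclic permutation `σ(u ⊗ v ⊗ w) = w ⊗ u ⊗ v` on `(A ⊗ A) ⊗ A`. -/
def cyc : (A ⊗[k] A) ⊗[k] A →ₗ[k] (A ⊗[k] A) ⊗[k] A :=
  (TensorProduct.assoc k A A A).symm.toLinearMap ∘ₗ
    (TensorProduct.comm k (A ⊗[k] A) A).toLinearMap

/-- A double Poisson bracket: antisymmetry, Leibniz, and double Jacobi. -/
def IsDoublePoisson (br : A →ₗ[k] A →ₗ[k] A ⊗[k] A) : Prop :=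
  (∀ a b : A, br b a = - (TensorProduct.comm k A A) (br a b)) ∧
  (∀ a b c : A, br a (b * c) = rAct c (br a b) + lAct b (br a c)) ∧
  (∀ a b c : A,
    brL br a (br b c) + cyc (brL br b (br c a)) + cyc (cyc (brL br c (br a b))) = 0)

/-- `(f ⊗ g) : A ⊗ A → k`. -/
def pair2 (f g : Module.Dual k A) : A ⊗[k] A →ₗ[k] k :=
  TensorProduct.lift ((LinearMap.mul k k).compl₁₂ f g)

/-- The associated trilinear map `n(a,f,b) = (id ⊗ f)(⟪b,a⟫)`. -/
def nMap (br : A →ₗ[k] A →ₗ[k] A ⊗[k] A) (a : A) (f : Module.Dual k A) (b : A) : A :=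
  TensorProduct.rid k A (TensorProduct.map LinearMap.id f (br b a))

/-- The associated trilinear map `m(f,a,g)(b) = (f ⊗ g)(⟪b,a⟫)`. -/
def mMap (br : A →ₗ[k] A →ₗ[k] A ⊗[k] A) (f : Module.Dual k A) (a : A)
    (g : Module.Dual k A) : Module.Dual k A :=
  pair2 f g ∘ₗ br.flip a

/-- The left action of `A` on `A* = Hom_k(A,k)`: `(a·f)(c) = f(c*a)`. -/
def dL (a : A) (f : Module.Dual k A) : Module.Dual k A :=
  f ∘ₗ LinearMap.mulRight k a

/-- The right action of `A` on `A* = Hom_k(A,k)`: `(f·b)(c) = f(b*c)`. -/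
def dR (f : Module.Dual k A) (b : A) : Module.Dual k A :=
  f ∘ₗ LinearMap.mulLeft k b

variable {B : Type*} [NonUnitalRing B] [Module k B] [SMulCommClass k B B]
  [IsScalarTower k B B]

/-- A morphism of double Poisson algebras: an algebra morphism intertwining the
brackets, `(φ ⊗ φ)(⟪a,a'⟫_A) = ⟪φ(a), φ(a')⟫_B`. -/
def IsDPMorphism (brA : A →ₗ[k] A →ₗ[k] A ⊗[k] A) (brB : B →ₗ[k] B →ₗ[k] B ⊗[k] B)
    (φ : A →ₙₐ[k] B) : Prop :=
  ∀ a a' : A,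
    TensorProduct.map (φ : A →ₗ[k] B) (φ : A →ₗ[k] B) (brA a a') = brB (φ a) (φ a')

/-- The mixed triple product `n_φ(a, f, b) := n_A(a, f∘φ, b)` for `f ∈ B*`. -/
def nPhi (brA : A →ₗ[k] A →ₗ[k] A ⊗[k] A) (φ : A →ₙₐ[k] B)
    (a : A) (f : Module.Dual k B) (b : A) : A :=
  nMap brA a (f ∘ₗ (φ : A →ₗ[k] B)) b

/-- The mixed triple product `m_φ(f, a, g) := m_B(f, φ(a), g)` for `f, g ∈ B*`. -/
def mPhi (brB : B →ₗ[k] B →ₗ[k] B ⊗[k] B) (φ : A →ₙₐ[k] B)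
    (f : Module.Dual k B) (a : A) (g : Module.Dual k B) : Module.Dual k B :=
  mMap brB f (φ a) g

section

variable {K R S : Type*} [Field K] [NonUnitalRing R] [Module K R] [NonUnitalRing S] [Module K S]

@[simp]
theorem pair2_tmul (f g : Module.Dual K R) (u v : R) : pair2 f g (u ⊗ₜ[K] v) = f u * g v := by
  simp [pair2]

theorem pair2_comm (f g : Module.Dual K R) (X : R ⊗[K] R) :
    pair2 f g (TensorProduct.comm K R R X) = pair2 g f X := by
  induction X using TensorProduct.induction_on with
  | zero => simp
  | tmul u v => simp [mul_comm]
  | add X Y hX hY => simp [hX, hY]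

theorem pair2_rAct [IsScalarTower K R R] (f g : Module.Dual K R) (c : R) (X : R ⊗[K] R) :
    pair2 f g (rAct c X) = pair2 f (dL c g) X := by
  induction X using TensorProduct.induction_on with
  | zero => simp
  | tmul u v => simp [rAct, dL]
  | add X Y hX hY => simp [hX, hY]

theorem pair2_lAct [SMulCommClass K R R] (f g : Module.Dual K R) (c : R) (X : R ⊗[K] R) :
    pair2 f g (lAct c X) = pair2 (dR f c) g X := by
  induction X using TensorProduct.induction_on with
  | zero => simp
  | tmul u v => simp [lAct, dR]
  | add X Y hX hY => simp [hX, hY]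

theorem rid_map_id_rAct [IsScalarTower K R R] (h : Module.Dual K R) (c : R) (X : R ⊗[K] R) :
    TensorProduct.rid K R (TensorProduct.map LinearMap.id h (rAct c X))
      = TensorProduct.rid K R (TensorProduct.map LinearMap.id (dL c h) X) := by
  induction X using TensorProduct.induction_on with
  | zero => simp
  | tmul u v => simp [rAct, dL]
  | add X Y hX hY => simp [hX, hY]

theorem rid_map_id_lAct [SMulCommClass K R R] (h : Module.Dual K R) (c : R) (X : R ⊗[K] R) :
    TensorProduct.rid K R (TensorProduct.map LinearMap.id h (lAct c X))
      = c * TensorProduct.rid K R (TensorProduct.map LinearMap.id h X) := by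
  induction X using TensorProduct.induction_on with
  | zero => simp
  | tmul u v => simp [lAct, mul_smul_comm]
  | add X Y hX hY => simp [hX, hY, mul_add]

theorem apply_rid_map_id_mul [IsScalarTower K R R] (f g : Module.Dual K R) (z : R)
    (X : R ⊗[K] R) :
    f (TensorProduct.rid K R (TensorProduct.map LinearMap.id g X) * z) = pair2 (dL z f) g X := by
  induction X using TensorProduct.induction_on with
  | zero => simp
  | tmul u v => simp [dL, smul_mul_assoc, mul_comm]
  | add X Y hX hY => simp [add_mul, hX, hY]

theorem map_rid_map_id_comp (φ : R →ₙₐ[K] S) (g : Module.Dual K S) (X : R ⊗[K] R) :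
    φ (TensorProduct.rid K R (TensorProduct.map LinearMap.id (g ∘ₗ (φ : R →ₗ[K] S)) X))
      = TensorProduct.rid K S
          (TensorProduct.map LinearMap.id g (TensorProduct.map (φ : R →ₗ[K] S) φ X)) := by
  induction X using TensorProduct.induction_on with
  | zero => simp
  | tmul u v => simp
  | add X Y hX hY => simp [hX, hY]

theorem dL_comp_map [IsScalarTower K R R] [IsScalarTower K S S] (φ : R →ₙₐ[K] S)
    (f : Module.Dual K S) (b : R) :
    dL b (f ∘ₗ (φ : R →ₗ[K] S)) = dL (φ b) f ∘ₗ (φ : R →ₗ[K] S) := by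
  ext x
  simp [dL]

theorem IsDPMorphism.map_nMap {brA : R →ₗ[K] R →ₗ[K] R ⊗[K] R}
    {brB : S →ₗ[K] S →ₗ[K] S ⊗[K] S} {φ : R →ₙₐ[K] S} (hφ : IsDPMorphism brA brB φ)
    (a : R) (g : Module.Dual K S) (b : R) :
    φ (nPhi brA φ a g b) = nMap brB (φ a) g (φ b) := by
  rw [nPhi, nMap, map_rid_map_id_comp, hφ, nMap]

section

variable [IsScalarTower K R R] [SMulCommClass K R R]

theorem nMap_mul_left {br : R →ₗ[K] R →ₗ[K] R ⊗[K] R}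
    (hLeibniz : ∀ a b c : R, br a (b * c) = rAct c (br a b) + lAct b (br a c))
    (a b c : R) (h : Module.Dual K R) :
    nMap br (a * b) h c = nMap br a (dL b h) c + a * nMap br b h c := by
  rw [nMap, hLeibniz, map_add, map_add, rid_map_id_rAct, rid_map_id_lAct, nMap, nMap]

theorem mMap_dR {br : R →ₗ[K] R →ₗ[K] R ⊗[K] R}
    (hAntisymm : ∀ a b : R, br b a = - TensorProduct.comm K R R (br a b))
    (hLeibniz : ∀ a b c : R, br a (b * c) = rAct c (br a b) + lAct b (br a c))
    (f : Module.Dual K R) (x : R) (g : Module.Dual K R) (y : R) :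
    mMap br f x (dR g y) = dR (mMap br f x g) y - dR f (nMap br x g y) := by
  ext z
  have hn : dR f (nMap br x g y) z = - pair2 g (dL z f) (br x y) := by
    rw [dR, LinearMap.comp_apply, LinearMap.mulLeft_apply, nMap, apply_rid_map_id_mul,
      hAntisymm, map_neg, pair2_comm]
  simp only [mMap, dR, LinearMap.sub_apply, LinearMap.comp_apply, LinearMap.flip_apply,
    LinearMap.mulLeft_apply] at hn ⊢
  rw [hn, hAntisymm x z, hAntisymm x (y * z), hLeibniz]
  simp only [map_neg, map_add, pair2_comm, pair2_rAct, pair2_lAct, dR]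
  ring

end

end

/-- The quartic Stasheff identities SI(4) for the mixed triple
products on `∂φ = A ⊕ B*[-1]`: `n_φ(ab, f, c) = n_φ(a, b·f, c) + a·n_φ(b, f, c)` and
`m_φ(f, a, g·b) = m_φ(f,a,g)·b − f·n_φ(a,g,b)`, where the `A`-actions on `B*` are
`(b·f)(x) = f(x φ(b))` and `(f·b)(x) = f(φ(b) x)`. -/
theorem mixed_quartic_stasheff (brA : A →ₗ[k] A →ₗ[k] A ⊗[k] A)
    (brB : B →ₗ[k] B →ₗ[k] B ⊗[k] B) (hA : IsDoublePoisson brA)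
    (hB : IsDoublePoisson brB) (φ : A →ₙₐ[k] B) (hφ : IsDPMorphism brA brB φ) :
    (∀ (a b c : A) (f : Module.Dual k B),
      nPhi brA φ (a * b) f c
        = nPhi brA φ a (f ∘ₗ LinearMap.mulRight k (φ b)) c + a * nPhi brA φ b f c) ∧
    (∀ (a b : A) (f g : Module.Dual k B),
      mPhi brB φ f a (g ∘ₗ LinearMap.mulLeft k (φ b))
        = mPhi brB φ f a g ∘ₗ LinearMap.mulLeft k (φ b)
          - f ∘ₗ LinearMap.mulLeft k (φ (nPhi brA φ a g b))) := by
  refine ⟨fun a b c f => ?_, fun a b f g => ?_⟩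
  · rw [nPhi, nMap_mul_left hA.2.1, dL_comp_map]
    rfl
  · rw [hφ.map_nMap]
    exact mMap_dR hB.1 hB.2.1 f (φ a) g (φ b)
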